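/- arXiv:1212.5123 — 7 statements merged into one kernel-verified Lean document; each statement's English description precedes it below -/
import Mathlib

section
/- Let f₁ ⊣ g₁ (f₁ : A ⥤ B, unit η₁) and f₂ ⊣ g₂ (f₂ : C ⥤ D, unit η₂) be l-reflections of categories, and let r : A ⥤ C, s : B ⥤ D be functors with f₁ ⋙ s = r ⋙ f₂. Then (r, s) is a morphism of l-reflections if and only if the mate of the square (r, s) is an identity natural transformation (in particular g₁ ⋙ r = s ⋙ g₂). The same equivalence holds for p-reflections. -/
/-!
If the counit of `f₁ ⊣ g₁` is an identity, the triangle identities force the unit `η₁` to be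
an identity on the image of `g₁`, and to be sent to an identity by `f₁`. Evaluating the
whiskered units at `g₁ b` then shows that the first condition makes every component of the mate
an identity. Conversely, `f₂ (r (η₁ a)) = s (f₁ (η₁ a))` is an identity, so naturality of `η₂`
along `r (η₁ a)` expresses `η₂` at `r a` through `η₂` at `r (g₁ (f₁ a))`, which is a component
of the mate.
-/

open CategoryTheory

universe v₁ v₂ v₃ v₄ u₁ u₂ u₃ u₄

namespace CategoryTheory

theorem NatTrans.app_eq_map_comp_app_comp_eqToHom {C : Type u₁} [Category.{v₁} C]
    {D : Type u₂} [Category.{v₂} D] {P Q : C ⥤ D} (α : P ⟶ Q) {c c' : C} (φ : c ⟶ c')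
    (e : Q.obj c = Q.obj c') (hφ : Q.map φ = eqToHom e) :
    α.app c = P.map φ ≫ α.app c' ≫ eqToHom e.symm := by
  rw [α.naturality_assoc, hφ, eqToHom_trans, eqToHom_refl, Category.comp_id]

theorem Functor.map_map_eq_eqToHom_of_comp_eq {A : Type u₁} [Category.{v₁} A]
    {B : Type u₂} [Category.{v₂} B] {C : Type u₃} [Category.{v₃} C] {D : Type u₄} [Category.{v₄} D]
    {f₁ : A ⥤ B} {s : B ⥤ D} {r : A ⥤ C} {f₂ : C ⥤ D} (hsq : f₁ ⋙ s = r ⋙ f₂) {a a' : A}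
    (φ : a ⟶ a') (e : f₁.obj a = f₁.obj a') (hφ : f₁.map φ = eqToHom e) :
    f₂.map (r.map φ) = eqToHom ((Functor.congr_obj hsq a).symm.trans
      ((congrArg s.obj e).trans (Functor.congr_obj hsq a'))) := by
  have hcomm := Functor.congr_hom hsq φ
  rw [Functor.comp_map, Functor.comp_map, hφ, eqToHom_map] at hcomm
  rw [← cancel_epi (eqToHom (Functor.congr_obj hsq a)), ← cancel_mono (eqToHom
    (Functor.congr_obj hsq a').symm), Category.assoc, ← hcomm]
  simp

namespace Adjunction

variable {X : Type u₁} [Category.{v₁} X] {Y : Type u₂} [Category.{v₂} Y]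
  {F : X ⥤ Y} {G : Y ⥤ X} (adj : F ⊣ G) {hc : G ⋙ F = 𝟭 Y}

theorem unit_app_obj_eq_eqToHom_of_counit_eq (hc' : adj.counit = eqToHom hc) (y : Y) :
    adj.unit.app (G.obj y) = eqToHom (congrArg G.obj (Functor.congr_obj hc y).symm) := by
  have htri := adj.right_triangle_components y
  rw [hc', eqToHom_app, eqToHom_map, comp_eqToHom_iff] at htri
  simpa using htri

theorem map_unit_app_eq_eqToHom_of_counit_eq (hc' : adj.counit = eqToHom hc) (x : X) :
    F.map (adj.unit.app x) = eqToHom (Functor.congr_obj hc (F.obj x)).symm := by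
  have htri := adj.left_triangle_components x
  rw [hc', eqToHom_app, comp_eqToHom_iff] at htri
  simpa using htri

end Adjunction

end CategoryTheory

section MorphismOfReflections

variable {A : Type u₁} [Category.{v₁} A] {B : Type u₂} [Category.{v₂} B]
  {C : Type u₃} [Category.{v₃} C] {D : Type u₄} [Category.{v₄} D]
  {f₁ : A ⥤ B} {g₁ : B ⥤ A} {f₂ : C ⥤ D} {g₂ : D ⥤ C}
  {adj₁ : f₁ ⊣ g₁} (adj₂ : f₂ ⊣ g₂) {hc₁ : g₁ ⋙ f₁ = 𝟭 B}
  {r : A ⥤ C} {s : B ⥤ D}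

theorem mate_eq_eqToHom_of_whiskerRight_unit_eq (hc₁' : adj₁.counit = eqToHom hc₁)
    (h : g₁ ⋙ r = s ⋙ g₂) {e : (f₁ ⋙ g₁) ⋙ r = r ⋙ (f₂ ⋙ g₂)}
    (e' : (g₁ ⋙ r) ⋙ (f₂ ⋙ g₂) = s ⋙ g₂)
    (hw : Functor.whiskerRight adj₁.unit r ≫ eqToHom e = Functor.whiskerLeft r adj₂.unit) :
    Functor.whiskerLeft (g₁ ⋙ r) adj₂.unit ≫ eqToHom e' = eqToHom h := by
  ext b
  have hunit := NatTrans.congr_app hw (g₁.obj b)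
  simp only [NatTrans.comp_app, Functor.whiskerRight_app, Functor.whiskerLeft_app, eqToHom_app,
    adj₁.unit_app_obj_eq_eqToHom_of_counit_eq hc₁', eqToHom_map, eqToHom_trans] at hunit
  simp only [NatTrans.comp_app, Functor.whiskerLeft_app, Functor.comp_obj, ← hunit, eqToHom_app,
    eqToHom_trans]

theorem whiskerRight_unit_eq_of_mate_eq_eqToHom (hc₁' : adj₁.counit = eqToHom hc₁)
    (hsq : f₁ ⋙ s = r ⋙ f₂) (h : g₁ ⋙ r = s ⋙ g₂) (e : (f₁ ⋙ g₁) ⋙ r = r ⋙ (f₂ ⋙ g₂))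
    {e' : (g₁ ⋙ r) ⋙ (f₂ ⋙ g₂) = s ⋙ g₂}
    (hw : Functor.whiskerLeft (g₁ ⋙ r) adj₂.unit ≫ eqToHom e' = eqToHom h) :
    Functor.whiskerRight adj₁.unit r ≫ eqToHom e = Functor.whiskerLeft r adj₂.unit := by
  ext a
  have hmate := NatTrans.congr_app hw (f₁.obj a)
  simp only [NatTrans.comp_app, Functor.whiskerLeft_app, Functor.comp_obj, eqToHom_app,
    comp_eqToHom_iff, eqToHom_trans] at hmate
  have hmap := congrArg g₂.map (Functor.map_map_eq_eqToHom_of_comp_eq hsq _ _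
    (adj₁.map_unit_app_eq_eqToHom_of_counit_eq hc₁' a))
  rw [eqToHom_map, ← Functor.comp_map] at hmap
  refine Eq.trans ?_ (NatTrans.app_eq_map_comp_app_comp_eqToHom adj₂.unit _ _ hmap).symm
  simp [hmate]

end MorphismOfReflections

/-- `(r, s)` is a morphism of (l- or p-)reflections iff the mate of the square is an
identity natural transformation. -/
theorem morphism_of_reflections_iff_mate_eq_id
    {A : Type u₁} [Category.{v₁} A] {B : Type u₂} [Category.{v₂} B]
    {C : Type u₃} [Category.{v₃} C] {D : Type u₄} [Category.{v₄} D]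
    {f₁ : A ⥤ B} {g₁ : B ⥤ A} {f₂ : C ⥤ D} {g₂ : D ⥤ C}
    (adj₁ : f₁ ⊣ g₁) (adj₂ : f₂ ⊣ g₂)
    -- `adj₁` and `adj₂` are l-reflections: their counits are identities
    (hc₁ : g₁ ⋙ f₁ = 𝟭 B) (hc₁' : adj₁.counit = eqToHom hc₁)
    -- a tight commuting square `(r, s) : f₁ → f₂`
    (r : A ⥤ C) (s : B ⥤ D) (hsq : f₁ ⋙ s = r ⋙ f₂) :
    -- `(r, s)` is a morphism of reflections ...
    (∃ h : g₁ ⋙ r = s ⋙ g₂,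
        Functor.whiskerRight adj₁.unit r ≫
            eqToHom (show (f₁ ⋙ g₁) ⋙ r = r ⋙ (f₂ ⋙ g₂) by
              rw [Functor.assoc, h, ← Functor.assoc, hsq, Functor.assoc]) =
          Functor.whiskerLeft r adj₂.unit) ↔
    -- ... iff the mate of the square is an identity natural transformation
    (∃ h : g₁ ⋙ r = s ⋙ g₂,
        Functor.whiskerLeft (g₁ ⋙ r) adj₂.unit ≫
            eqToHom (show (g₁ ⋙ r) ⋙ (f₂ ⋙ g₂) = s ⋙ g₂ by
              rw [show (g₁ ⋙ r) ⋙ f₂ ⋙ g₂ = (g₁ ⋙ (r ⋙ f₂)) ⋙ g₂ from rfl, ← hsq,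
                show (g₁ ⋙ (f₁ ⋙ s)) ⋙ g₂ = (g₁ ⋙ f₁) ⋙ (s ⋙ g₂) from rfl, hc₁,
                Functor.id_comp]) =
          eqToHom h) :=
  exists_congr fun h =>
    ⟨mate_eq_eqToHom_of_whiskerRight_unit_eq adj₂ hc₁' h _,
      whiskerRight_unit_eq_of_mate_eq_eqToHom adj₂ hc₁' hsq h _⟩
end

section
/- Let f : A ⥤ B be a functor and let P_f be the full subcategory of the comma category B/f spanned by the objects (x, a, α) with α an isomorphism; let p : P_f ⥤ A and q : P_f ⥤ B be the restricted projections and λ : q ⟶ p ⋙ f the restricted canonical transformation (a natural isomorphism). The functor r_f : A ⥤ P_f, a ↦ (f a, a, 𝟙_{f a}), satisfies r_f ⋙ p = 𝟭 A and r_f ⋙ q = f, and there is an adjunction p ⊣ r_f whose counit is the identity and whose unit is a natural isomorphism (so p ⊣ r_f is a p-reflection and in particular an adjoint equivalence); the unit η is the unique natural transformation 𝟭_{P_f} ⟶ p ⋙ r_f with whiskerRight η p = 𝟙 and whiskerRight η q = λ. -/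
/-!
Every object `(x, a, α)` of `P_f` is isomorphic to `r_f a = (f a, a, 𝟙)` through `(α, 𝟙)`,
naturally in the object, and `r_f ⋙ p` is the identity on the nose; so `p` and `r_f` form an
equivalence whose counit is the identity and whose unit has components `(α, 𝟙)`. A morphism of
`P_f` is a pair of morphisms, so it is determined by its images under `p` and `q`; hence a
transformation into `P_f` is determined by its whiskerings along `p` and `q`, which makes the
unit unique.
-/

open CategoryTheory

universe v₁ v₂ u₁ u₂

variable {A : Type u₁} [Category.{v₁} A] {B : Type u₂} [Category.{v₂} B]

/-- The pseudolimit `P_f` of the arrow `f`: the full subcategory of the comma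
category `B/f` spanned by the objects whose structure morphism is invertible. -/
abbrev PseudoLimitArrow (f : A ⥤ B) : Type max u₁ u₂ v₂ :=
  ObjectProperty.FullSubcategory (fun X : Comma (𝟭 B) f => IsIso X.hom)

/-- The restricted projection `p : P_f ⥤ A`. -/
def pProj (f : A ⥤ B) : PseudoLimitArrow f ⥤ A :=
  ObjectProperty.ι _ ⋙ Comma.snd (𝟭 B) f

/-- The restricted projection `q : P_f ⥤ B`. -/
def qProj (f : A ⥤ B) : PseudoLimitArrow f ⥤ B :=
  ObjectProperty.ι _ ⋙ Comma.fst (𝟭 B) f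

/-- The restricted canonical transformation `λ : q ⟶ p ⋙ f`. -/
def lamProj (f : A ⥤ B) : qProj f ⟶ pProj f ⋙ f :=
  Functor.whiskerLeft (ObjectProperty.ι _) (Comma.natTrans (𝟭 B) f)

/-- The canonical functor `r_f : A ⥤ P_f`, `a ↦ (f a, a, 𝟙 (f a))`. -/
@[simps]
def rPFunctor (f : A ⥤ B) : A ⥤ PseudoLimitArrow f where
  obj a := ⟨{ left := f.obj a, right := a, hom := 𝟙 (f.obj a) }, by dsimp; infer_instance⟩
  map s := ObjectProperty.homMk { left := f.map s, right := s, w := by simp }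

namespace PseudoLimitArrow

variable (f : A ⥤ B)

instance isIso_hom (X : PseudoLimitArrow f) : IsIso X.obj.hom := X.property

lemma hom_ext {X Y : PseudoLimitArrow f} {g h : X ⟶ Y}
    (hp : (pProj f).map g = (pProj f).map h) (hq : (qProj f).map g = (qProj f).map h) :
    g = h :=
  ObjectProperty.hom_ext _ (Comma.hom_ext _ _ hq hp)

lemma natTrans_ext {C : Type*} [Category C] {F G : C ⥤ PseudoLimitArrow f} {α β : F ⟶ G}
    (hp : Functor.whiskerRight α (pProj f) = Functor.whiskerRight β (pProj f))
    (hq : Functor.whiskerRight α (qProj f) = Functor.whiskerRight β (qProj f)) :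
    α = β :=
  NatTrans.ext (funext fun X => hom_ext f (congr_app hp X) (congr_app hq X))

noncomputable def isoRPFunctorObj (X : PseudoLimitArrow f) :
    X ≅ (rPFunctor f).obj ((pProj f).obj X) :=
  ObjectProperty.isoMk _ <| Comma.isoMk (asIso X.obj.hom : _ ≅ f.obj X.obj.right) (Iso.refl _) <| by
    show X.obj.hom ≫ 𝟙 _ = X.obj.hom ≫ f.map (𝟙 _)
    rw [f.map_id]

-- Up to unfolding, the `p`-component of naturality reads `g ≫ 𝟙 = 𝟙 ≫ g` and the
-- `q`-component is the naturality of `λ`.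
noncomputable def unitIso : 𝟭 (PseudoLimitArrow f) ≅ pProj f ⋙ rPFunctor f :=
  NatIso.ofComponents (isoRPFunctorObj f) fun g =>
    hom_ext f ((Category.comp_id _).trans (Category.id_comp _).symm) ((lamProj f).naturality g)

noncomputable def equivalence : PseudoLimitArrow f ≌ A where
  functor := pProj f
  inverse := rPFunctor f
  unitIso := unitIso f
  counitIso := Iso.refl _
  functor_unitIso_comp _ := Category.comp_id _

lemma whiskerRight_unit_pProj :
    Functor.whiskerRight (equivalence f).unit (pProj f) = 𝟙 (pProj f) :=
  rfl

lemma whiskerRight_unit_qProj :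
    Functor.whiskerRight (equivalence f).unit (qProj f) = lamProj f :=
  rfl

end PseudoLimitArrow

/-- The projection `p : P_f ⥤ A` from the pseudolimit of the arrow `f` admits
`r_f` as a right adjoint, with identity counit and invertible unit: a
p-reflection, and in particular an adjoint equivalence. -/
theorem pseudolimit_p_reflection (f : A ⥤ B) :
    rPFunctor f ⋙ pProj f = 𝟭 A ∧
    rPFunctor f ⋙ qProj f = f ∧
    ∃ adj : pProj f ⊣ rPFunctor f,
      adj.counit = eqToHom (show rPFunctor f ⋙ pProj f = 𝟭 A from rfl) ∧
      IsIso adj.unit ∧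
      (pProj f).IsEquivalence ∧
      Functor.whiskerRight adj.unit (pProj f) = 𝟙 (pProj f) ∧
      Functor.whiskerRight adj.unit (qProj f) = lamProj f ∧
      ∀ η' : 𝟭 (PseudoLimitArrow f) ⟶ pProj f ⋙ rPFunctor f,
        Functor.whiskerRight η' (pProj f) = 𝟙 (pProj f) →
        Functor.whiskerRight η' (qProj f) = lamProj f →
        η' = adj.unit := by
  refine ⟨rfl, rfl, (PseudoLimitArrow.equivalence f).toAdjunction, rfl,
    inferInstanceAs (IsIso (PseudoLimitArrow.unitIso f).hom),
    (PseudoLimitArrow.equivalence f).isEquivalence_functor,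
    PseudoLimitArrow.whiskerRight_unit_pProj f, PseudoLimitArrow.whiskerRight_unit_qProj f, ?_⟩
  intro η' hp hq
  exact PseudoLimitArrow.natTrans_ext f (hp.trans (PseudoLimitArrow.whiskerRight_unit_pProj f).symm)
    (hq.trans (PseudoLimitArrow.whiskerRight_unit_qProj f).symm)
end

section
/- Let f : A ⥤ B and g : C ⥤ A be functors between small categories. Then the square in the category Cat of small categories whose top edge is the functor Comma.preRight : Comma (𝟭 B) (g ⋙ f) ⥤ Comma (𝟭 B) f (sending (x, c, α : x ⟶ f (g c)) to (x, g c, α)), whose left and right edges are the projections Comma.snd : Comma (𝟭 B) (g ⋙ f) ⥤ C and Comma.snd : Comma (𝟭 B) f ⥤ A, and whose bottom edge is g : C ⥤ A, commutes and is a pullback square (IsPullback) in Cat. -/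
open CategoryTheory Limits

universe u

/-!
An object `(x, c, α : x ⟶ f (g c))` of `B/(g ⋙ f)` is literally an object `(x, g c, α)` of `B/f`
whose `A`-component lies in the image of `g`. So a functor `H` into `B/f` and a functor `K`
into `C` with `H ⋙ snd = K ⋙ g` glue to a functor into `B/(g ⋙ f)`, once the structure
morphisms are transported along the strict equalities `(H t).right = g (K t)`. Uniqueness holds
because a functor into a comma category is determined by its two projections together with
its structure morphisms, compared up to `HEq`.
-/

namespace CategoryTheory.Comma

section

variable {A B T X : Type*} [Category* A] [Category* B] [Category* T] [Category* X]
  {L : A ⥤ T} {R : B ⥤ T}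

theorem functor_ext {M N : X ⥤ Comma L R} (hfst : M ⋙ fst L R = N ⋙ fst L R)
    (hsnd : M ⋙ snd L R = N ⋙ snd L R) (hhom : ∀ x, (M.obj x).hom ≍ (N.obj x).hom) :
    M = N :=
  Functor.ext (fun x => Comma.ext (Functor.congr_obj hfst x) (Functor.congr_obj hsnd x) (hhom x))
    fun _ _ φ => hom_ext _ _ (by simpa using Functor.congr_hom hfst φ)
      (by simpa using Functor.congr_hom hsnd φ)

end

section

variable {A C D T X : Type*} [Category* A] [Category* C] [Category* D] [Category* T]
  [Category* X] (L : D ⥤ T) (G : C ⥤ A) (R : A ⥤ T)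

def liftPreRight (H : X ⥤ Comma L R) (K : X ⥤ C) (w : H ⋙ snd L R = K ⋙ G) :
    X ⥤ Comma L (G ⋙ R) where
  obj x :=
    { left := (H.obj x).left
      right := K.obj x
      hom := (H.obj x).hom ≫ eqToHom (congrArg R.obj (Functor.congr_obj w x)) }
  map φ :=
    { left := (H.map φ).left
      right := K.map φ
      w := by
        have hw := (H.map φ).w
        have hK := Functor.congr_hom w φ
        simp only [Functor.comp_map, snd_map] at hK
        dsimp
        rw [reassoc_of% hw, hK]
        simp [eqToHom_map] }

variable {L G R}

theorem liftPreRight_comp_preRight (H : X ⥤ Comma L R) (K : X ⥤ C) (w : H ⋙ snd L R = K ⋙ G) :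
    liftPreRight L G R H K w ⋙ preRight L G R = H :=
  functor_ext rfl w.symm fun _ => comp_eqToHom_heq _ _

theorem liftPreRight_comp_snd (H : X ⥤ Comma L R) (K : X ⥤ C) (w : H ⋙ snd L R = K ⋙ G) :
    liftPreRight L G R H K w ⋙ snd L (G ⋙ R) = K :=
  rfl

theorem eq_liftPreRight {H : X ⥤ Comma L R} {K : X ⥤ C} (w : H ⋙ snd L R = K ⋙ G)
    {M : X ⥤ Comma L (G ⋙ R)} (hH : M ⋙ preRight L G R = H) (hK : M ⋙ snd L (G ⋙ R) = K) :
    M = liftPreRight L G R H K w := by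
  subst hH hK
  exact functor_ext rfl rfl fun _ => (comp_eqToHom_heq _ _).symm

end

theorem isPullback_preRight {A C D T : Type u} [SmallCategory A] [SmallCategory C]
    [SmallCategory D] [SmallCategory T] (L : D ⥤ T) (G : C ⥤ A) (R : A ⥤ T) :
    IsPullback (preRight L G R).toCatHom (snd L (G ⋙ R)).toCatHom (snd L R).toCatHom
      G.toCatHom := by
  have w (s : PullbackCone (snd L R).toCatHom G.toCatHom) :
      s.fst.toFunctor ⋙ snd L R = s.snd.toFunctor ⋙ G :=
    congrArg Cat.Hom.toFunctor s.condition
  exact IsPullback.of_isLimit <|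
    PullbackCone.IsLimit.mk (f := (snd L R).toCatHom) (g := G.toCatHom) rfl
    (fun s => (liftPreRight L G R s.fst.toFunctor s.snd.toFunctor (w s)).toCatHom)
    (fun s => Cat.Hom.ext (liftPreRight_comp_preRight _ _ (w s)))
    (fun s => Cat.Hom.ext (liftPreRight_comp_snd _ _ (w s)))
    (fun s _ hH hK => Cat.Hom.ext (eq_liftPreRight (w s) (congrArg Cat.Hom.toFunctor hH)
      (congrArg Cat.Hom.toFunctor hK)))

end CategoryTheory.Comma

/-- For functors `f : A ⥤ B` and `g : C ⥤ A` between small categories, the square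
with top edge `Comma.preRight : B/(g ⋙ f) ⥤ B/f`, vertical edges the `snd`
projections, and bottom edge `g` commutes and is a pullback square in `Cat`. -/
theorem comma_preRight_isPullback
    {A B C : Type u} [SmallCategory A] [SmallCategory B] [SmallCategory C]
    (f : A ⥤ B) (g : C ⥤ A) :
    Comma.preRight (𝟭 B) g f ⋙ Comma.snd (𝟭 B) f = Comma.snd (𝟭 B) (g ⋙ f) ⋙ g ∧
    IsPullback (C := Cat.{u, u})
      (P := Cat.of (Comma (𝟭 B) (g ⋙ f))) (X := Cat.of (Comma (𝟭 B) f))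
      (Y := Cat.of C) (Z := Cat.of A)
      (Comma.preRight (𝟭 B) g f).toCatHom (Comma.snd (𝟭 B) (g ⋙ f)).toCatHom
      (Comma.snd (𝟭 B) f).toCatHom g.toCatHom :=
  ⟨rfl, Comma.isPullback_preRight (𝟭 B) g f⟩
end

section
/- Let a strictly commuting square of small categories and functors f₁ : A ⥤ B, f₂ : C ⥤ D, r : A ⥤ C, s : B ⥤ D with f₁ ⋙ s = r ⋙ f₂ be a pullback square (IsPullback) in the category Cat of small categories. If f₂ ⊣ g₂ is an l-reflection, then there exists a unique l-reflection f₁ ⊣ g₁ such that (r, s) : f₁ → f₂ is a morphism of l-reflections; moreover, if f₂ ⊣ g₂ is a p-reflection (its unit is a natural isomorphism) then so is the induced f₁ ⊣ g₁. -/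
open CategoryTheory

universe u

variable {A B C D : Type u} [SmallCategory A] [SmallCategory B]
  [SmallCategory C] [SmallCategory D]

/-- `adj` is an l-reflection: its counit is an identity. -/
def IsLRefl {X Y : Type u} [SmallCategory X] [SmallCategory Y]
    {F : X ⥤ Y} {G : Y ⥤ X} (adj : F ⊣ G) : Prop :=
  ∃ h : G ⋙ F = 𝟭 Y, adj.counit = eqToHom h

/-- `(r, s)` is a morphism of reflections from `adj₁` to `adj₂` (over the strictly
commuting square `f₁ ⋙ s = r ⋙ f₂`): the squares of right adjoints commute and the
whiskered units agree. -/
def IsReflMorphism {f₁ : A ⥤ B} {g₁ : B ⥤ A} {f₂ : C ⥤ D} {g₂ : D ⥤ C}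
    (adj₁ : f₁ ⊣ g₁) (adj₂ : f₂ ⊣ g₂) (r : A ⥤ C) (s : B ⥤ D)
    (hsq : f₁ ⋙ s = r ⋙ f₂) : Prop :=
  ∃ h : g₁ ⋙ r = s ⋙ g₂,
    Functor.whiskerRight adj₁.unit r ≫
        eqToHom (show (f₁ ⋙ g₁) ⋙ r = r ⋙ (f₂ ⋙ g₂) by
          rw [Functor.assoc, h, ← Functor.assoc, hsq, Functor.assoc]) =
      Functor.whiskerLeft r adj₂.unit

/-!
Pullbacks in `Cat` have a two-dimensional universal property. A natural transformation
`α : F ⟶ G` of functors `T ⥤ X` is the same as a functor out of the cylinder `T × 𝟚`, so the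
universal property applied to cylinders shows that transformations into `A` are determined by
their whiskerings with `f₁` and `r`, and that compatible pairs of whiskered transformations lift.

The right adjoint `g₁` is the functor induced by `𝟭 B` and `s ⋙ g₂`; the unit `η₁` is induced by
the identity of `f₁` and by `r ⋙ η₂`, a compatible pair because `f₂ η₂` is an identity when the
counit of `f₂ ⊣ g₂` is. The triangle identities, and the invertibility of `η₁` when `η₂` is
invertible, are checked after whiskering with `f₁` and `r`. Uniqueness holds because `g₁` is
forced by the same universal property and an adjunction is determined by its counit.
-/

universe w

lemma ULift.not_up_true_le_up_false : ¬ (ULift.up true : ULift.{w} Bool) ≤ ULift.up false := by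
  decide

namespace CategoryTheory

section Cylinder

variable {T X Y : Type*} [Category T] [Category X] [Category Y]

-- `ULift Bool`, ordered by `false < true`, plays the role of the walking arrow `𝟚`.
def cylinder {F G : T ⥤ X} (α : F ⟶ G) : T × ULift.{w} Bool ⥤ X where
  obj
    | (t, ⟨false⟩) => F.obj t
    | (t, ⟨true⟩) => G.obj t
  map {x y} φ :=
    match x, y, φ with
    | (_, ⟨false⟩), (_, ⟨false⟩), φ => F.map φ.1
    | (_, ⟨false⟩), (u, ⟨true⟩), φ => F.map φ.1 ≫ α.app u
    | (_, ⟨true⟩), (_, ⟨true⟩), φ => G.map φ.1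
    | (_, ⟨true⟩), (_, ⟨false⟩), φ => (ULift.not_up_true_le_up_false (leOfHom φ.2)).elim
  map_id := by
    rintro ⟨t, ⟨_ | _⟩⟩ <;> simp
  map_comp {x y z} φ ψ := by
    obtain ⟨t, ⟨_ | _⟩⟩ := x <;> obtain ⟨u, ⟨_ | _⟩⟩ := y <;> obtain ⟨v, ⟨_ | _⟩⟩ := z <;>
      first
        | exact (ULift.not_up_true_le_up_false (leOfHom φ.2)).elim
        | exact (ULift.not_up_true_le_up_false (leOfHom ψ.2)).elim
        | simp

def cylinderIncl (b : Bool) : T ⥤ T × ULift.{w} Bool :=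
  (𝟭 T).prod' ((Functor.const T).obj ⟨b⟩)

def cylinderArrow (t : T) : (cylinderIncl.{w} false).obj t ⟶ (cylinderIncl true).obj t :=
  (𝟙 t, homOfLE (Bool.false_le _))

@[simp]
lemma cylinder_map_cylinderArrow {F G : T ⥤ X} (α : F ⟶ G) (t : T) :
    (cylinder.{w} α).map (cylinderArrow t) = α.app t :=
  show F.map (𝟙 t) ≫ α.app t = α.app t by simp

def natTransOfCylinder (M : T × ULift.{w} Bool ⥤ X) :
    cylinderIncl false ⋙ M ⟶ cylinderIncl true ⋙ M where
  app t := M.map (cylinderArrow t)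
  naturality t u φ := by
    simp only [Functor.comp_map, ← M.map_comp]
    congr 1
    exact Prod.ext (by simp [cylinderArrow, cylinderIncl]) (Subsingleton.elim _ _)

lemma natTransOfCylinder_eq {M : T × ULift.{w} Bool ⥤ X}
    {β : cylinderIncl false ⋙ M ⟶ cylinderIncl true ⋙ M} (h : M = cylinder β) :
    natTransOfCylinder M = β := by
  ext t
  have h_t := Functor.congr_hom h (cylinderArrow t)
  rw [cylinder_map_cylinderArrow] at h_t
  -- both `eqToHom`s in `h_t` relate definitionally equal objects
  exact h_t.trans ((Category.id_comp _).trans (Category.comp_id _))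

lemma cylinder_injective {F G : T ⥤ X} :
    Function.Injective (cylinder.{w} : (F ⟶ G) → T × ULift.{w} Bool ⥤ X) := by
  intro α α' h
  exact (natTransOfCylinder_eq rfl).symm.trans (natTransOfCylinder_eq h)

lemma cylinder_comp {F G : T ⥤ X} (α : F ⟶ G) (H : X ⥤ Y) :
    cylinder.{w} α ⋙ H = cylinder (Functor.whiskerRight α H) := by
  refine Functor.hext (by rintro ⟨t, ⟨_ | _⟩⟩ <;> rfl) ?_
  rintro ⟨t, ⟨_ | _⟩⟩ ⟨u, ⟨_ | _⟩⟩ φ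
  · exact heq_of_eq (by simp [cylinder])
  · exact heq_of_eq (by simp [cylinder, ← Functor.map_comp])
  · exact (ULift.not_up_true_le_up_false (leOfHom φ.2)).elim
  · exact heq_of_eq (by simp [cylinder])

lemma cylinder_congr {F F' G G' : T ⥤ X} (hF : F = F') (hG : G = G')
    {α : F ⟶ G} {α' : F' ⟶ G'} (h : α ≫ eqToHom hG = eqToHom hF ≫ α') :
    cylinder.{w} α = cylinder α' := by
  subst hF hG
  simp only [eqToHom_refl, Category.comp_id, Category.id_comp] at h
  rw [h]

end Cylinder

namespace Adjunction

variable {X Y : Type*} [Category X] [Category Y] {F : X ⥤ Y} {G : Y ⥤ X}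

lemma map_unit_app_of_counit_eq_eqToHom (adj : F ⊣ G) {h : G ⋙ F = 𝟭 Y}
    (hε : adj.counit = eqToHom h) (x : X) :
    F.map (adj.unit.app x) = eqToHom (Functor.congr_obj h (F.obj x)).symm := by
  have := adj.left_triangle_components x
  rw [hε, eqToHom_app, comp_eqToHom_iff] at this
  simpa using this

lemma unit_app_obj_of_counit_eq_eqToHom (adj : F ⊣ G) {h : G ⋙ F = 𝟭 Y}
    (hε : adj.counit = eqToHom h) (y : Y) :
    adj.unit.app (G.obj y) = eqToHom (congrArg G.obj (Functor.congr_obj h y)).symm := by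
  have := adj.right_triangle_components y
  rw [hε, eqToHom_app, eqToHom_map, comp_eqToHom_iff] at this
  simpa using this

def mkOfEqToHomCounit (h : G ⋙ F = 𝟭 Y) (η : 𝟭 X ⟶ F ⋙ G)
    (hηF : ∀ x, F.map (η.app x) = eqToHom (Functor.congr_obj h (F.obj x)).symm)
    (hηG : ∀ y, η.app (G.obj y) = eqToHom (congrArg G.obj (Functor.congr_obj h y)).symm) :
    F ⊣ G where
  unit := η
  counit := eqToHom h
  left_triangle_components x := by simp [hηF]
  right_triangle_components y := by simp [hηG, eqToHom_map]

end Adjunction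

namespace IsPullback

variable {f₁ : A ⥤ B} {f₂ : C ⥤ D} {r : A ⥤ C} {s : B ⥤ D}

lemma functor_comp_eq (hpb : IsPullback f₁.toCatHom r.toCatHom s.toCatHom f₂.toCatHom) :
    f₁ ⋙ s = r ⋙ f₂ :=
  congrArg Cat.Hom.toFunctor hpb.w

lemma functor_ext (hpb : IsPullback f₁.toCatHom r.toCatHom s.toCatHom f₂.toCatHom)
    {W : Type u} [SmallCategory W] {k l : W ⥤ A} (h₁ : k ⋙ f₁ = l ⋙ f₁) (h₂ : k ⋙ r = l ⋙ r) :
    k = l :=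
  congrArg Cat.Hom.toFunctor <| hpb.hom_ext (k := k.toCatHom) (l := l.toCatHom)
    (congrArg Functor.toCatHom h₁) (congrArg Functor.toCatHom h₂)

lemma exists_functor_lift (hpb : IsPullback f₁.toCatHom r.toCatHom s.toCatHom f₂.toCatHom)
    {W : Type u} [SmallCategory W] (P : W ⥤ B) (Q : W ⥤ C) (h : P ⋙ s = Q ⋙ f₂) :
    ∃ L : W ⥤ A, L ⋙ f₁ = P ∧ L ⋙ r = Q :=
  have w : P.toCatHom ≫ s.toCatHom = Q.toCatHom ≫ f₂.toCatHom := congrArg Functor.toCatHom h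
  ⟨(hpb.lift P.toCatHom Q.toCatHom w).toFunctor,
    congrArg Cat.Hom.toFunctor (hpb.lift_fst _ _ w),
    congrArg Cat.Hom.toFunctor (hpb.lift_snd _ _ w)⟩

lemma natTrans_ext (hpb : IsPullback f₁.toCatHom r.toCatHom s.toCatHom f₂.toCatHom)
    {T : Type u} [SmallCategory T] {P Q : T ⥤ A} {α α' : P ⟶ Q}
    (h₁ : Functor.whiskerRight α f₁ = Functor.whiskerRight α' f₁)
    (h₂ : Functor.whiskerRight α r = Functor.whiskerRight α' r) : α = α' :=
  cylinder_injective.{u} <| hpb.functor_ext (by rw [cylinder_comp, cylinder_comp, h₁])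
    (by rw [cylinder_comp, cylinder_comp, h₂])

lemma exists_natTrans_lift (hpb : IsPullback f₁.toCatHom r.toCatHom s.toCatHom f₂.toCatHom)
    {T : Type u} [SmallCategory T] {P Q : T ⥤ A}
    (β : P ⋙ f₁ ⟶ Q ⋙ f₁) (γ : P ⋙ r ⟶ Q ⋙ r) (h : cylinder.{u} β ⋙ s = cylinder γ ⋙ f₂) :
    ∃ α : P ⟶ Q, Functor.whiskerRight α f₁ = β ∧ Functor.whiskerRight α r = γ := by
  obtain ⟨L, hL₁, hL₂⟩ := hpb.exists_functor_lift _ _ h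
  obtain rfl : cylinderIncl false ⋙ L = P :=
    hpb.functor_ext (by rw [Functor.assoc, hL₁]; rfl) (by rw [Functor.assoc, hL₂]; rfl)
  obtain rfl : cylinderIncl true ⋙ L = Q :=
    hpb.functor_ext (by rw [Functor.assoc, hL₁]; rfl) (by rw [Functor.assoc, hL₂]; rfl)
  exact ⟨natTransOfCylinder L, natTransOfCylinder_eq hL₁, natTransOfCylinder_eq hL₂⟩

lemma isIso_of_isIso_whiskerRight (hpb : IsPullback f₁.toCatHom r.toCatHom s.toCatHom f₂.toCatHom)
    {T : Type u} [SmallCategory T] {P Q : T ⥤ A} (α : P ⟶ Q)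
    [IsIso (Functor.whiskerRight α f₁)] [IsIso (Functor.whiskerRight α r)] : IsIso α := by
  have hsq := hpb.functor_comp_eq
  obtain ⟨θ, hθ₁, hθ₂⟩ := hpb.exists_natTrans_lift
    (inv (Functor.whiskerRight α f₁)) (inv (Functor.whiskerRight α r)) <| by
      rw [cylinder_comp, cylinder_comp]
      refine cylinder_congr (by rw [Functor.assoc, hsq]; rfl) (by rw [Functor.assoc, hsq]; rfl) ?_
      ext t
      have key := Functor.congr_hom hsq (α.app t)
      dsimp at key
      simp [key]
  refine ⟨θ, hpb.natTrans_ext ?_ ?_, hpb.natTrans_ext ?_ ?_⟩ <;> simp [hθ₁, hθ₂]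

lemma exists_unit_lift (hpb : IsPullback f₁.toCatHom r.toCatHom s.toCatHom f₂.toCatHom)
    {g₂ : D ⥤ C} (adj₂ : f₂ ⊣ g₂) {hgf₂ : g₂ ⋙ f₂ = 𝟭 D} (hε₂ : adj₂.counit = eqToHom hgf₂)
    {g₁ : B ⥤ A} (hgf₁ : g₁ ⋙ f₁ = 𝟭 B) (hgr : g₁ ⋙ r = s ⋙ g₂) :
    ∃ η : 𝟭 A ⟶ f₁ ⋙ g₁,
      Functor.whiskerRight η f₁ = eqToHom (by rw [Functor.assoc, hgf₁]; rfl) ∧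
      Functor.whiskerRight η r = Functor.whiskerLeft r adj₂.unit ≫
        eqToHom (by
          rw [Functor.assoc, hgr, ← Functor.assoc, ← Functor.assoc, hpb.functor_comp_eq]) := by
  have hsq := hpb.functor_comp_eq
  refine hpb.exists_natTrans_lift _ _ ?_
  rw [cylinder_comp, cylinder_comp]
  refine cylinder_congr (by rw [Functor.assoc, hsq]; rfl) (by rw [Functor.assoc, hsq]; rfl) ?_
  ext a
  simp [eqToHom_map, adj₂.map_unit_app_of_counit_eq_eqToHom hε₂]

lemma exists_lRefl_isReflMorphism
    (hpb : IsPullback f₁.toCatHom r.toCatHom s.toCatHom f₂.toCatHom) (hsq : f₁ ⋙ s = r ⋙ f₂)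
    {g₂ : D ⥤ C} (adj₂ : f₂ ⊣ g₂) (hl₂ : IsLRefl adj₂) :
    ∃ (g₁ : B ⥤ A) (adj₁ : f₁ ⊣ g₁), IsLRefl adj₁ ∧ IsReflMorphism adj₁ adj₂ r s hsq ∧
      (IsIso adj₂.unit → IsIso adj₁.unit) := by
  obtain ⟨hgf₂, hε₂⟩ := hl₂
  obtain ⟨g₁, hgf₁, hgr⟩ :=
    hpb.exists_functor_lift (𝟭 B) (s ⋙ g₂) (by rw [Functor.assoc, hgf₂]; rfl)
  obtain ⟨η, hηf, hηr⟩ := hpb.exists_unit_lift adj₂ hε₂ hgf₁ hgr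
  have hηf_app (a : A) : f₁.map (η.app a) = eqToHom (Functor.congr_obj hgf₁ (f₁.obj a)).symm := by
    simpa using NatTrans.congr_app hηf a
  have hηg : Functor.whiskerLeft g₁ η = eqToHom (by rw [← Functor.assoc, hgf₁]; rfl) := by
    refine hpb.natTrans_ext ?_ ?_
    · ext b
      simp [hηf_app, eqToHom_map]
    · ext b
      have hηr_app := NatTrans.congr_app hηr (g₁.obj b)
      simp only [Functor.whiskerRight_app, NatTrans.comp_app, Functor.whiskerLeft_app] at hηr_app
      have hobj : r.obj (g₁.obj b) = g₂.obj (s.obj b) := Functor.congr_obj hgr b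
      simp [hηr_app, NatTrans.congr adj₂.unit hobj,
        adj₂.unit_app_obj_of_counit_eq_eqToHom hε₂, eqToHom_map]
  let adj₁ := Adjunction.mkOfEqToHomCounit hgf₁ η hηf_app
    fun b => by simpa using NatTrans.congr_app hηg b
  refine ⟨g₁, adj₁, ⟨hgf₁, rfl⟩, ⟨hgr, (comp_eqToHom_iff _ _ _).mpr hηr⟩, fun _ => ?_⟩
  have : IsIso (Functor.whiskerRight η f₁) := by rw [hηf]; infer_instance
  have : IsIso (Functor.whiskerRight η r) := by rw [hηr]; infer_instance
  exact hpb.isIso_of_isIso_whiskerRight η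

end IsPullback

end CategoryTheory

lemma IsLRefl.eq {X Y : Type u} [SmallCategory X] [SmallCategory Y] {F : X ⥤ Y} {G : Y ⥤ X}
    {adj adj' : F ⊣ G} (h : IsLRefl adj) (h' : IsLRefl adj') : adj = adj' := by
  obtain ⟨e, he⟩ := h
  obtain ⟨e', he'⟩ := h'
  exact Adjunction.ext_counit (he.trans he'.symm)

/-- Given a strict pullback square `(f₁, r, s, f₂)` in `Cat` and an l-reflection
`f₂ ⊣ g₂`, there is a unique l-reflection `f₁ ⊣ g₁` making `(r, s)` a morphism of
l-reflections; moreover it is a p-reflection whenever `f₂ ⊣ g₂` is. -/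
theorem pullback_lifts_l_reflections
    (f₁ : A ⥤ B) (f₂ : C ⥤ D) (r : A ⥤ C) (s : B ⥤ D)
    (hsq : f₁ ⋙ s = r ⋙ f₂)
    (hpb : IsPullback (C := Cat.{u, u})
      (P := Cat.of A) (X := Cat.of B) (Y := Cat.of C) (Z := Cat.of D)
      f₁.toCatHom r.toCatHom s.toCatHom f₂.toCatHom)
    (g₂ : D ⥤ C) (adj₂ : f₂ ⊣ g₂) (hl₂ : IsLRefl adj₂) :
    ∃ (g₁ : B ⥤ A) (adj₁ : f₁ ⊣ g₁),
      IsLRefl adj₁ ∧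
      IsReflMorphism adj₁ adj₂ r s hsq ∧
      (IsIso adj₂.unit → IsIso adj₁.unit) ∧
      ∀ (g₁' : B ⥤ A) (adj₁' : f₁ ⊣ g₁'),
        IsLRefl adj₁' → IsReflMorphism adj₁' adj₂ r s hsq →
        g₁' = g₁ ∧ HEq adj₁' adj₁ := by
  obtain ⟨g₁, adj₁, hl₁, hmor, hiso⟩ := hpb.exists_lRefl_isReflMorphism hsq adj₂ hl₂
  refine ⟨g₁, adj₁, hl₁, hmor, hiso, fun g₁' adj₁' hl₁' hmor' => ?_⟩
  obtain rfl : g₁' = g₁ :=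
    hpb.functor_ext (hl₁'.1.trans hl₁.1.symm) (hmor'.1.trans hmor.1.symm)
  exact ⟨rfl, heq_of_eq (hl₁'.eq hl₁)⟩
end

section
/- Let f : A ⥤ B be a functor and X any category. Given functors t, t' : X ⥤ B/f and natural transformations θ_p : t ⋙ p_f ⟶ t' ⋙ p_f and θ_q : t ⋙ q_f ⟶ t' ⋙ q_f satisfying θ_q ≫ whiskerLeft t' λ_f = whiskerLeft t λ_f ≫ whiskerRight θ_p f, there exists a unique natural transformation φ : t ⟶ t' with whiskerRight φ p_f = θ_p and whiskerRight φ q_f = θ_q. This is the two-dimensional universal property of the comma category B/f as the colax limit of the arrow f. -/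
open CategoryTheory

universe v₁ v₂ v₃ u₁ u₂ u₃

variable {A : Type u₁} [Category.{v₁} A] {B : Type u₂} [Category.{v₂} B]

namespace CategoryTheory.Comma

open CategoryTheory.Functor

variable {T : Type*} [Category T] {L : A ⥤ T} {R : B ⥤ T}
  {X : Type*} [Category X] {t t' : X ⥤ Comma L R}

/-- `w` says exactly that each pair of components `(α.app x, β.app x)` is a morphism of
`Comma L R`. -/
def natTransMk (α : t ⋙ fst L R ⟶ t' ⋙ fst L R) (β : t ⋙ snd L R ⟶ t' ⋙ snd L R)
    (w : whiskerRight α L ≫ whiskerLeft t' (natTrans L R) =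
      whiskerLeft t (natTrans L R) ≫ whiskerRight β R) : t ⟶ t' where
  app x :=
    { left := α.app x
      right := β.app x
      w := by simpa using congr_app w x }
  naturality _ _ g := by
    ext
    · exact α.naturality g
    · exact β.naturality g

@[simp]
lemma whiskerRight_fst_natTransMk (α : t ⋙ fst L R ⟶ t' ⋙ fst L R)
    (β : t ⋙ snd L R ⟶ t' ⋙ snd L R)
    (w : whiskerRight α L ≫ whiskerLeft t' (natTrans L R) =
      whiskerLeft t (natTrans L R) ≫ whiskerRight β R) :
    whiskerRight (natTransMk α β w) (fst L R) = α := rfl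

@[simp]
lemma whiskerRight_snd_natTransMk (α : t ⋙ fst L R ⟶ t' ⋙ fst L R)
    (β : t ⋙ snd L R ⟶ t' ⋙ snd L R)
    (w : whiskerRight α L ≫ whiskerLeft t' (natTrans L R) =
      whiskerLeft t (natTrans L R) ≫ whiskerRight β R) :
    whiskerRight (natTransMk α β w) (snd L R) = β := rfl

lemma functor_hom_ext {φ ψ : t ⟶ t'}
    (h₁ : whiskerRight φ (fst L R) = whiskerRight ψ (fst L R))
    (h₂ : whiskerRight φ (snd L R) = whiskerRight ψ (snd L R)) : φ = ψ := by
  ext x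
  · exact congr_app h₁ x
  · exact congr_app h₂ x

end CategoryTheory.Comma

/-- Two-dimensional universal property of the comma category `B/f` as the colax
limit of the arrow `f`: modifications of cones factor uniquely through the
projections. -/
theorem comma_colax_limit_two_dimensional (f : A ⥤ B)
    {X : Type u₃} [Category.{v₃} X] (t t' : X ⥤ Comma (𝟭 B) f)
    (θp : t ⋙ Comma.snd (𝟭 B) f ⟶ t' ⋙ Comma.snd (𝟭 B) f)
    (θq : t ⋙ Comma.fst (𝟭 B) f ⟶ t' ⋙ Comma.fst (𝟭 B) f)
    (compat : θq ≫ Functor.whiskerLeft t' (Comma.natTrans (𝟭 B) f) =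
      Functor.whiskerLeft t (Comma.natTrans (𝟭 B) f) ≫ Functor.whiskerRight θp f) :
    ∃! φ : t ⟶ t',
      Functor.whiskerRight φ (Comma.snd (𝟭 B) f) = θp ∧
      Functor.whiskerRight φ (Comma.fst (𝟭 B) f) = θq :=
  -- `compat` is accepted for `L = 𝟭 B` because `whiskerRight θq (𝟭 B)` is `θq` up to defeq.
  ⟨Comma.natTransMk θq θp compat,
    ⟨Comma.whiskerRight_snd_natTransMk _ _ _, Comma.whiskerRight_fst_natTransMk _ _ _⟩,
    fun _ ⟨hp, hq⟩ => Comma.functor_hom_ext hq hp⟩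
end

section
/- Let A and B be monoidal categories, G : A ⥤ B a strong monoidal functor, and F ⊣ G an adjunction with F : B ⥤ A, unit η : 𝟭 B ⟶ F ⋙ G and counit ε : G ⋙ F ⟶ 𝟭 A. Then there is exactly one oplax monoidal structure on F for which η and ε are monoidal with respect to the induced oplax monoidal structures on identity and composite functors, i.e. satisfy, for a transformation τ between oplax monoidal functors, τ.app (x ⊗ y) ≫ δ^{target}_{x,y} = δ^{source}_{x,y} ≫ (τ.app x ⊗ τ.app y) and τ.app 𝟙 ≫ (unit constraint of target) = (unit constraint of source). Its structure morphisms are δ^F_{b,b'} = F.map ((η.app b ⊗ η.app b') ≫ μ^G_{F b, F b'}) ≫ ε.app (F b ⊗ F b') : F (b ⊗ b') ⟶ F b ⊗ F b' and F.map u^G ≫ ε.app 𝟙_A : F 𝟙_B ⟶ 𝟙_A, where μ^G and u^G : 𝟙_B ⟶ G 𝟙_A denote the (invertible) structure morphisms of G. -/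
open CategoryTheory MonoidalCategory

universe v₁ v₂ u₁ u₂

variable {A : Type u₁} [Category.{v₁} A] [MonoidalCategory A]
  {B : Type u₂} [Category.{v₂} B] [MonoidalCategory B]

/-- Given an oplax monoidal structure on `F`, the unit and counit of `F ⊣ G` are
monoidal with respect to the induced oplax structures on identity and composite
functors. -/
def OplaxDoctrinalConds {G : A ⥤ B} [G.Monoidal] {F : B ⥤ A} (adj : F ⊣ G)
    (O : F.OplaxMonoidal) : Prop :=
  letI := O;
  ((∀ x y : B,
      adj.unit.app (x ⊗ y) ≫ Functor.OplaxMonoidal.δ (F ⋙ G) x y =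
        Functor.OplaxMonoidal.δ (𝟭 B) x y ≫ (adj.unit.app x ⊗ₘ adj.unit.app y)) ∧
    adj.unit.app (𝟙_ B) ≫ Functor.OplaxMonoidal.η (F ⋙ G) =
      Functor.OplaxMonoidal.η (𝟭 B)) ∧
  ((∀ x y : A,
      adj.counit.app (x ⊗ y) ≫ Functor.OplaxMonoidal.δ (𝟭 A) x y =
        Functor.OplaxMonoidal.δ (G ⋙ F) x y ≫ (adj.counit.app x ⊗ₘ adj.counit.app y)) ∧
    adj.counit.app (𝟙_ A) ≫ Functor.OplaxMonoidal.η (𝟭 A) =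
      Functor.OplaxMonoidal.η (G ⋙ F))
/-!
The mates of the structure morphisms of `G` form an oplax structure on `F`
(`Adjunction.leftAdjointOplaxMonoidal`). Because `μ G` and `ε G` are invertible, monoidality of
the unit says exactly that `δ F` and `η F` are these mates, i.e. that the adjunction is
`Adjunction.IsMonoidal`; monoidality of the counit is then automatic. This gives existence and
uniqueness at once.
-/

namespace CategoryTheory.Adjunction

open Functor.OplaxMonoidal Functor.LaxMonoidal

variable {G : A ⥤ B} {F : B ⥤ A} (adj : F ⊣ G)

lemma isMonoidal_of_unit [F.OplaxMonoidal] [G.LaxMonoidal]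
    (hε : adj.unit.app (𝟙_ B) ≫ G.map (η F) = ε G)
    (hμ : ∀ X Y : B, adj.unit.app (X ⊗ Y) ≫ G.map (δ F X Y) =
      (adj.unit.app X ⊗ₘ adj.unit.app Y) ≫ μ G _ _) :
    adj.IsMonoidal where
  leftAdjoint_ε := hε.symm
  leftAdjoint_μ X Y := by
    rw [G.map_comp, reassoc_of% hμ, ← μ_natural, tensorHom_comp_tensorHom_assoc,
      right_triangle_components, right_triangle_components, id_tensorHom_id, Category.id_comp]
    rfl

lemma eq_leftAdjointOplaxMonoidal [G.LaxMonoidal] [F.OplaxMonoidal] [adj.IsMonoidal] :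
    ‹F.OplaxMonoidal› = adj.leftAdjointOplaxMonoidal := by
  ext
  · rw [leftAdjointOplaxMonoidal_η, Equiv.eq_symm_apply, homEquiv_unit,
      unit_app_unit_comp_map_η]
  · rw [leftAdjointOplaxMonoidal_δ, Equiv.eq_symm_apply, homEquiv_unit,
      unit_app_tensor_comp_map_δ]

section Monoidal

variable [G.Monoidal] [F.OplaxMonoidal]

lemma unit_app_tensor_comp_δ_comp_iff (X Y : B) :
    adj.unit.app (X ⊗ Y) ≫ δ (F ⋙ G) X Y =
        δ (𝟭 B) X Y ≫ (adj.unit.app X ⊗ₘ adj.unit.app Y) ↔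
      adj.unit.app (X ⊗ Y) ≫ G.map (δ F X Y) =
        (adj.unit.app X ⊗ₘ adj.unit.app Y) ≫ μ G _ _ := by
  rw [comp_δ, id_δ, Category.id_comp, ← Category.assoc, ← Functor.Monoidal.μIso_inv,
    Iso.comp_inv_eq]
  rfl

lemma unit_app_unit_comp_η_comp_iff :
    adj.unit.app (𝟙_ B) ≫ η (F ⋙ G) = η (𝟭 B) ↔
      adj.unit.app (𝟙_ B) ≫ G.map (η F) = ε G := by
  rw [comp_η, id_η, ← Category.assoc, ← Functor.Monoidal.εIso_inv, Iso.comp_inv_eq,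
    Category.id_comp]
  rfl

variable [adj.IsMonoidal]

lemma counit_app_tensor_comp_δ_id (X Y : A) :
    adj.counit.app (X ⊗ Y) ≫ δ (𝟭 A) X Y =
      δ (G ⋙ F) X Y ≫ (adj.counit.app X ⊗ₘ adj.counit.app Y) := by
  rw [id_δ, comp_δ, Category.assoc, ← adj.map_μ_comp_counit_app_tensor,
    Functor.Monoidal.map_δ_μ_assoc]
  exact Category.comp_id _

lemma counit_app_unit_comp_η_id :
    adj.counit.app (𝟙_ A) ≫ η (𝟭 A) = η (G ⋙ F) := by
  rw [id_η, comp_η, ← adj.map_ε_comp_counit_app_unit,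
    Functor.Monoidal.map_η_ε_assoc]
  exact Category.comp_id _

end Monoidal

lemma oplaxDoctrinalConds_iff_isMonoidal [G.Monoidal] (O : F.OplaxMonoidal) :
    OplaxDoctrinalConds adj O ↔ letI := O; adj.IsMonoidal := by
  let _ := O
  constructor
  · rintro ⟨⟨hδ, hη⟩, -⟩
    exact adj.isMonoidal_of_unit (adj.unit_app_unit_comp_η_comp_iff.1 hη)
      fun X Y ↦ (adj.unit_app_tensor_comp_δ_comp_iff X Y).1 (hδ X Y)
  · intro _
    exact ⟨⟨fun X Y ↦
        (adj.unit_app_tensor_comp_δ_comp_iff X Y).2 (adj.unit_app_tensor_comp_map_δ X Y),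
      adj.unit_app_unit_comp_η_comp_iff.2 adj.unit_app_unit_comp_map_η⟩,
      adj.counit_app_tensor_comp_δ_id, adj.counit_app_unit_comp_η_id⟩

end CategoryTheory.Adjunction

/-- Doctrinal adjunction, colax case: if `G` is strong monoidal and `F ⊣ G`, there
is exactly one oplax monoidal structure on `F` making the unit and counit of the
adjunction monoidal, with structure morphisms the mates of those of `G`. -/
theorem doctrinal_adjunction_oplax
    {G : A ⥤ B} [G.Monoidal] {F : B ⥤ A} (adj : F ⊣ G) :
    ∃ O : F.OplaxMonoidal,
      (OplaxDoctrinalConds adj O ∧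
        (letI := O;
          (∀ b b' : B,
            Functor.OplaxMonoidal.δ F b b' =
              F.map ((adj.unit.app b ⊗ₘ adj.unit.app b') ≫
                  Functor.LaxMonoidal.μ G (F.obj b) (F.obj b')) ≫
                adj.counit.app (F.obj b ⊗ F.obj b')) ∧
          Functor.OplaxMonoidal.η F =
            F.map (Functor.LaxMonoidal.ε G) ≫ adj.counit.app (𝟙_ A))) ∧
      ∀ O' : F.OplaxMonoidal, OplaxDoctrinalConds adj O' → O' = O := by
  let O := adj.leftAdjointOplaxMonoidal
  refine ⟨O, ⟨(adj.oplaxDoctrinalConds_iff_isMonoidal O).2 inferInstance,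
    fun b b' ↦ adj.homEquiv_counit _ _ _, (adj.map_ε_comp_counit_app_unit).symm⟩, ?_⟩
  intro O' hO'
  let _ := O'
  have := (adj.oplaxDoctrinalConds_iff_isMonoidal O').1 hO'
  exact adj.eq_leftAdjointOplaxMonoidal
end

section
/- Let 𝔽 denote the full subcategory of the arrow category of Cat (the category of small categories) spanned by those functors between small categories that are injective on objects and fully faithful. Then 𝔽 has all limits and all colimits of shapes indexed by small categories, and 𝔽 is cartesian closed. -/
open CategoryTheory CategoryTheory.Limits

universe u

/-- An object of the arrow category of `Cat` is in `𝔽` if the corresponding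
functor is injective on objects and fully faithful. -/
def FProp (F : Arrow Cat.{u, u}) : Prop :=
  Function.Injective F.hom.toFunctor.obj ∧ F.hom.toFunctor.Full ∧ F.hom.toFunctor.Faithful

/-- The category `𝔽`: the full subcategory of the arrow category of `Cat` spanned
by the functors which are injective on objects and fully faithful. -/
abbrev FCat : Type (u + 1) := ObjectProperty.FullSubcategory FProp.{u}

/-! A functor in `𝔽` is determined up to isomorphism by its codomain together with the set of
objects in its image, and a morphism of `𝔽` by its component on codomains (the other component is
forced, the functor being injective on objects and faithful, and it exists, the functor being full).
So `𝔽` is equivalent to the category of small categories with a marked set of objects and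
functors preserving the marking. There limits and colimits are formed in `Cat`, marking the objects
all of whose projections are marked, resp. the images of marked objects; the exponential of
`(C, S)` and `(D, T)` is `C ⥤ D` marked by the functors sending `S` into `T`, and currying
restricts to the required adjunction. -/

namespace CategoryTheory.Functor

variable {C D E : Type*} [Category C] [Category D] [Category E]

lemma eq_of_comp_eq_of_injective_obj {G : D ⥤ E} [G.Faithful] (hG : Function.Injective G.obj)
    {F₁ F₂ : C ⥤ D} (h : F₁ ⋙ G = F₂ ⋙ G) : F₁ = F₂ :=
  Functor.ext (fun c => hG (Functor.congr_obj h c)) fun c c' f => G.map_injective <| by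
    simpa [eqToHom_map] using Functor.congr_hom h f

noncomputable def liftAlong (G : D ⥤ E) [G.Full] [G.Faithful] (F : C ⥤ E)
    (hF : ∀ c, F.obj c ∈ Set.range G.obj) : C ⥤ D where
  obj c := (hF c).choose
  map {c c'} f :=
    G.preimage (eqToHom (hF c).choose_spec ≫ F.map f ≫ eqToHom (hF c').choose_spec.symm)
  map_id c := G.map_injective (by simp)
  map_comp f g := G.map_injective (by simp)

lemma liftAlong_comp (G : D ⥤ E) [G.Full] [G.Faithful] (F : C ⥤ E)
    (hF : ∀ c, F.obj c ∈ Set.range G.obj) : liftAlong G F hF ⋙ G = F :=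
  Functor.ext (fun c => (hF c).choose_spec) fun c c' f => by simp [liftAlong]

end CategoryTheory.Functor

structure MarkedCat : Type (u + 1) where
  cat : Cat.{u, u}
  marked : Set cat

namespace MarkedCat

instance : Category.{u} MarkedCat where
  Hom X Y := { H : X.cat ⟶ Y.cat // Set.MapsTo H.toFunctor.obj X.marked Y.marked }
  id X := ⟨𝟙 X.cat, Set.mapsTo_id _⟩
  comp f g := ⟨f.1 ≫ g.1, g.2.comp f.2⟩

def forget : MarkedCat.{u} ⥤ Cat.{u, u} where
  obj := cat
  map := Subtype.val

noncomputable section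

section Limits

variable {J : Type u} [SmallCategory J] (D : J ⥤ MarkedCat.{u})

def limitCone : Cone D where
  pt := ⟨limit (D ⋙ forget), ⋂ j, (limit.π (D ⋙ forget) j).toFunctor.obj ⁻¹' (D.obj j).marked⟩
  π.app j := ⟨limit.π (D ⋙ forget) j, fun _ hx => Set.mem_iInter.1 hx j⟩
  π.naturality _ _ φ := Subtype.ext ((Category.id_comp _).trans (limit.w (D ⋙ forget) φ).symm)

def limitConeIsLimit : IsLimit (limitCone D) where
  lift s := ⟨limit.lift (D ⋙ forget) (forget.mapCone s), fun x hx => Set.mem_iInter.2 fun j => by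
    have := Functor.congr_obj (congrArg Cat.Hom.toFunctor (limit.lift_π (forget.mapCone s) j)) x
    exact (congrArg (· ∈ (D.obj j).marked) this).mpr ((s.π.app j).2 hx)⟩
  fac s j := Subtype.ext (limit.lift_π (forget.mapCone s) j)
  uniq s m hm := Subtype.ext <| limit.hom_ext fun j =>
    (congrArg Subtype.val (hm j)).trans (limit.lift_π (forget.mapCone s) j).symm

def colimitCocone : Cocone D where
  pt := ⟨colimit (D ⋙ forget), ⋃ j, (colimit.ι (D ⋙ forget) j).toFunctor.obj '' (D.obj j).marked⟩
  ι.app j := ⟨colimit.ι (D ⋙ forget) j, fun x hx => Set.mem_iUnion.2 ⟨j, x, hx, rfl⟩⟩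
  ι.naturality _ _ φ := Subtype.ext ((colimit.w (D ⋙ forget) φ).trans (Category.comp_id _).symm)

def colimitCoconeIsColimit : IsColimit (colimitCocone D) where
  desc s := ⟨colimit.desc (D ⋙ forget) (forget.mapCocone s), fun x hx => by
    obtain ⟨j, y, hy, rfl⟩ := Set.mem_iUnion.1 hx
    have := Functor.congr_obj (congrArg Cat.Hom.toFunctor (colimit.ι_desc (forget.mapCocone s) j)) y
    exact (congrArg (· ∈ s.pt.marked) this).mpr ((s.ι.app j).2 hy)⟩
  fac s j := Subtype.ext (colimit.ι_desc (forget.mapCocone s) j)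
  uniq s m hm := Subtype.ext <| colimit.hom_ext fun j =>
    (congrArg Subtype.val (hm j)).trans (colimit.ι_desc (forget.mapCocone s) j).symm

end Limits

instance : HasLimitsOfSize.{u, u} MarkedCat.{u} where
  has_limits_of_shape _ := { has_limit := fun D => ⟨⟨⟨_, limitConeIsLimit D⟩⟩⟩ }

instance : HasColimitsOfSize.{u, u} MarkedCat.{u} where
  has_colimits_of_shape _ := { has_colimit := fun D => ⟨⟨⟨_, colimitCoconeIsColimit D⟩⟩⟩ }

def terminal : MarkedCat.{u} := ⟨Cat.chosenTerminal, Set.univ⟩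

def terminalIsTerminal : IsTerminal terminal.{u} :=
  IsTerminal.ofUniqueHom (fun X => ⟨Cat.chosenTerminalIsTerminal.from X.cat, Set.mapsTo_univ _ _⟩)
    fun _ _ => Subtype.ext (Cat.chosenTerminalIsTerminal.hom_ext _ _)

def prod (X Y : MarkedCat.{u}) : MarkedCat.{u} := ⟨Cat.of (X.cat × Y.cat), X.marked ×ˢ Y.marked⟩

def prodFan (X Y : MarkedCat.{u}) : BinaryFan X Y :=
  BinaryFan.mk (P := prod X Y) ⟨(CategoryTheory.Prod.fst X.cat Y.cat).toCatHom, fun _ hx => hx.1⟩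
    ⟨(CategoryTheory.Prod.snd X.cat Y.cat).toCatHom, fun _ hx => hx.2⟩

def prodFanIsLimit (X Y : MarkedCat.{u}) : IsLimit (prodFan X Y) :=
  BinaryFan.isLimitMk
    (fun s => ⟨(s.fst.1.toFunctor.prod' s.snd.1.toFunctor).toCatHom,
      fun _ hx => ⟨s.fst.2 hx, s.snd.2 hx⟩⟩)
    (fun _ => rfl) (fun _ => rfl)
    fun s m h₁ h₂ => by
      rw [← h₁, ← h₂]
      rfl

-- Chosen explicitly so that `X ⊗ Y` is definitionally `Cat.of (X.cat × Y.cat)`, where currying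
-- applies directly in `tensorHomEquiv`.
instance : CartesianMonoidalCategory MarkedCat.{u} :=
  .ofChosenFiniteProducts ⟨_, terminalIsTerminal⟩ fun X Y => ⟨_, prodFanIsLimit X Y⟩

variable (X : MarkedCat.{u})

def exp : MarkedCat.{u} ⥤ MarkedCat.{u} where
  obj Z := ⟨Cat.of (X.cat ⥤ Z.cat), {K | Set.MapsTo K.obj X.marked Z.marked}⟩
  map H := ⟨(Cat.exp X.cat).map H.1, fun _ hK => H.2.comp hK⟩

def tensorHomEquiv (Y Z : MarkedCat.{u}) :
    ((MonoidalCategory.tensorLeft X).obj Y ⟶ Z) ≃ (Y ⟶ (exp X).obj Z) where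
  toFun G := ⟨(Functor.curry.obj G.1.toFunctor).flip.toCatHom,
    fun _ hy _ hx => G.2 (Set.mk_mem_prod hx hy)⟩
  invFun H := ⟨(Functor.uncurry.obj H.1.toFunctor.flip).toCatHom, fun _ hp => H.2 hp.2 hp.1⟩
  left_inv G := Subtype.ext (Cat.Hom.ext (Functor.uncurry_obj_curry_obj G.1.toFunctor))
  right_inv H := Subtype.ext (Cat.Hom.ext
    (congrArg Functor.flip (Functor.curry_obj_uncurry_obj H.1.toFunctor.flip)))

instance : MonoidalClosed MarkedCat.{u} where
  closed X :=
    { rightAdj := exp X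
      adj := Adjunction.mkOfHomEquiv
        { homEquiv := tensorHomEquiv X
          homEquiv_naturality_left_symm := fun _ _ => rfl
          homEquiv_naturality_right := fun _ _ => Subtype.ext rfl } }

end

end MarkedCat

namespace FCat

lemma hom_ext {X Y : FCat.{u}} {f g : X ⟶ Y} (h : f.hom.right = g.hom.right) : f = g := by
  have : Y.obj.hom.toFunctor.Faithful := Y.property.2.2
  refine InducedCategory.hom_ext (Arrow.hom_ext _ _ (Cat.Hom.ext ?_) h)
  refine Functor.eq_of_comp_eq_of_injective_obj Y.property.1 ?_
  exact congrArg Cat.Hom.toFunctor (f.hom.w.trans (h ▸ g.hom.w.symm))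

def toMarkedCat : FCat.{u} ⥤ MarkedCat.{u} where
  obj X := ⟨X.obj.right, Set.range X.obj.hom.toFunctor.obj⟩
  map f := ⟨f.hom.right, by
    rintro _ ⟨a, rfl⟩
    exact ⟨f.hom.left.toFunctor.obj a, Functor.congr_obj (congrArg Cat.Hom.toFunctor f.hom.w) a⟩⟩

instance : toMarkedCat.{u}.Faithful where
  map_injective h := hom_ext (congrArg Subtype.val h)

instance : toMarkedCat.{u}.Full where
  map_surjective {X Y} H := by
    have : Y.obj.hom.toFunctor.Full := Y.property.2.1
    have : Y.obj.hom.toFunctor.Faithful := Y.property.2.2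
    have hH (a : X.obj.left) : (X.obj.hom.toFunctor ⋙ H.1.toFunctor).obj a ∈
        Set.range Y.obj.hom.toFunctor.obj := H.2 ⟨a, rfl⟩
    exact ⟨⟨{ left := (Functor.liftAlong Y.obj.hom.toFunctor _ hH).toCatHom
              right := H.1
              w := Cat.Hom.ext (Functor.liftAlong_comp Y.obj.hom.toFunctor _ hH) }⟩, rfl⟩

def ofMarkedCat (M : MarkedCat.{u}) : FCat.{u} :=
  ⟨Arrow.mk (ObjectProperty.ι (C := M.cat) (· ∈ M.marked)).toCatHom,
    fun _ _ h => ObjectProperty.FullSubcategory.ext h,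
    inferInstanceAs (ObjectProperty.ι (C := M.cat) (· ∈ M.marked)).Full,
    inferInstanceAs (ObjectProperty.ι (C := M.cat) (· ∈ M.marked)).Faithful⟩

lemma toMarkedCat_obj_ofMarkedCat (M : MarkedCat.{u}) : toMarkedCat.obj (ofMarkedCat M) = M := by
  refine congrArg (MarkedCat.mk M.cat) (Set.ext fun x => ?_)
  exact ⟨fun ⟨p, hp⟩ => hp ▸ p.2, fun hx => ⟨⟨x, hx⟩, rfl⟩⟩

instance : toMarkedCat.{u}.EssSurj where
  mem_essImage M := ⟨ofMarkedCat M, ⟨eqToIso (toMarkedCat_obj_ofMarkedCat M)⟩⟩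

instance : toMarkedCat.{u}.IsEquivalence where

end FCat

/-- `𝔽` has all small limits and colimits and is cartesian closed. -/
theorem FCat_hasLimits_hasColimits_cartesianClosed :
    HasLimitsOfSize.{u, u} FCat.{u} ∧
    HasColimitsOfSize.{u, u} FCat.{u} ∧
    ∃ P : CartesianMonoidalCategory FCat.{u},
      Nonempty (@MonoidalClosed FCat.{u} _ P.toMonoidalCategory) := by
  have hl : HasLimitsOfSize.{u, u} FCat.{u} :=
    Adjunction.has_limits_of_equivalence FCat.toMarkedCat
  have hc : HasColimitsOfSize.{u, u} FCat.{u} :=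
    Adjunction.has_colimits_of_equivalence FCat.toMarkedCat
  let P : CartesianMonoidalCategory FCat.{u} := .ofHasFiniteProducts
  exact ⟨hl, hc, P, ⟨cartesianClosedOfEquiv FCat.toMarkedCat.asEquivalence.symm⟩⟩
end
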